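/- arXiv:1610.03412 — 3 statements merged into one kernel-verified Lean document; each statement's English description precedes it below -/
import Mathlib

section
/- Let G be a graph whose edge set is partitioned into circuits C_1, ..., C_q, arriving in this order, and for each l let G_l be the union of C_1, ..., C_l. Construct a graph T̄ with a vertex w_l for each circuit C_l that either (1) contains a vertex not appearing in G_{l-1}, or (2) contains vertices lying in two different connected components of G_{l-1}; add edges connecting w_l to the representatives (first circuits using chosen common vertices) of each connected component of G_{l-1} that C_l touches. If G is connected, then T̄ is a tree. -/
/-- The subgraph `G_l` consisting of the vertices and edges of the first `l` circuits. -/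
def circuitsUpTo {V : Type*} (G : SimpleGraph V) {q : ℕ}
    (C : Fin q → Σ v : V, G.Walk v v) (l : ℕ) : SimpleGraph V :=
  SimpleGraph.fromEdgeSet {e | ∃ i : Fin q, (i : ℕ) < l ∧ e ∈ (C i).2.edges}

/-- Circuit `C l` contains a vertex not appearing in `G_{l-1}` (condition (1)). -/
def containsNewVertex {V : Type*} (G : SimpleGraph V) {q : ℕ}
    (C : Fin q → Σ v : V, G.Walk v v) (l : Fin q) : Prop :=
  ∃ v, v ∈ (C l).2.support ∧ ∀ i : Fin q, i < l → v ∉ (C i).2.support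

/-- Circuit `C l` contains vertices lying in two different connected components of
`G_{l-1}` (condition (2)). -/
def mergesComponents {V : Type*} (G : SimpleGraph V) {q : ℕ}
    (C : Fin q → Σ v : V, G.Walk v v) (l : Fin q) : Prop :=
  ∃ v w, v ∈ (C l).2.support ∧ w ∈ (C l).2.support ∧
    (∃ i : Fin q, i < l ∧ v ∈ (C i).2.support) ∧
    (∃ j : Fin q, j < l ∧ w ∈ (C j).2.support) ∧
    ¬ (circuitsUpTo G C (l : ℕ)).Reachable v w

/-- The graph `T̄`, built on the circuits satisfying condition (1) or (2), with an edge
from `w_l` to `w_(pre v)` for the selected vertex `v` of each connected component of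
`G_{l-1}` touched by `C_l`, is a tree, provided `G` is connected. -/
theorem tbar_isTree
    {V : Type*} [Fintype V] [DecidableEq V] (G : SimpleGraph V) (hG : G.Connected)
    (q : ℕ) (hq : 0 < q) (C : Fin q → Σ v : V, G.Walk v v)
    (hcirc : ∀ i, (C i).2.IsCircuit)
    (hdisj : ∀ i j, i ≠ j → ∀ e : Sym2 V, e ∈ (C i).2.edges → e ∉ (C j).2.edges)
    (hcover : ∀ e : Sym2 V, e ∈ G.edgeSet ↔ ∃ i, e ∈ (C i).2.edges)
    -- `pre v` is the index of the first circuit containing `v`: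
    (pre : V → Fin q)
    (hpre : ∀ (v : V) (i : Fin q), v ∈ (C i).2.support →
      pre v ≤ i ∧ v ∈ (C (pre v)).2.support)
    -- `S l` is the set of chosen common vertices: one vertex of `C l` in each connected
    -- component of `G_{l-1}` intersected by `C l`:
    (S : Fin q → Set V)
    (hS1 : ∀ l, ∀ v ∈ S l,
      v ∈ (C l).2.support ∧ ∃ i : Fin q, i < l ∧ v ∈ (C i).2.support)
    (hS2 : ∀ (l : Fin q) (v : V), v ∈ (C l).2.support →
      (∃ i : Fin q, i < l ∧ v ∈ (C i).2.support) →
      ∃ w ∈ S l, (circuitsUpTo G C (l : ℕ)).Reachable v w)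
    (hS3 : ∀ l : Fin q, ∀ v ∈ S l, ∀ w ∈ S l,
      (circuitsUpTo G C (l : ℕ)).Reachable v w → v = w) :
    (SimpleGraph.fromRel
      (fun (a b : {l : Fin q // containsNewVertex G C l ∨ mergesComponents G C l}) =>
        ∃ v ∈ S a.1, pre v = b.1)).IsTree := by
  classical
  set T := SimpleGraph.fromRel
      (fun (a b : {l : Fin q // containsNewVertex G C l ∨ mergesComponents G C l}) =>
        ∃ v ∈ S a.1, pre v = b.1) with hTdef
  -- if `u` is in some circuit, then `pre u` satisfies condition (1)
  have preNew : ∀ (u : V) (i : Fin q), u ∈ (C i).2.support → containsNewVertex G C (pre u) := by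
    intro u i hu
    exact ⟨u, (hpre u i hu).2, fun j hj hmem => absurd (hpre u j hmem).1 (not_le.mpr hj)⟩
  -- if `pre u = k` and `u ∈ C k`, then `C k` has a new vertex
  have newAt : ∀ (k : Fin q) (u : V), u ∈ (C k).2.support → pre u = k →
      containsNewVertex G C k := by
    intro k u hu he
    exact ⟨u, hu, fun j hj hmem => absurd he ((hpre u j hmem).1.trans_lt hj).ne⟩
  -- edges of circuit `i < m` are edges of `circuitsUpTo m`
  have hedsub : ∀ (m : ℕ) (i : Fin q), (i : ℕ) < m →
      ∀ e ∈ (C i).2.edges, e ∈ (circuitsUpTo G C m).edgeSet := by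
    intro m i him e he
    show e ∈ (SimpleGraph.fromEdgeSet _).edgeSet
    rw [SimpleGraph.edgeSet_fromEdgeSet]
    exact ⟨⟨i, him, he⟩,
      fun hd => G.not_isDiag_of_mem_edgeSet ((C i).2.edges_subset_edgeSet he) hd⟩
  -- vertices of a single circuit `i < m` are reachable in `circuitsUpTo m`
  have reachInCircuit : ∀ (m : ℕ) (i : Fin q), (i : ℕ) < m → ∀ u v,
      u ∈ (C i).2.support → v ∈ (C i).2.support →
      (circuitsUpTo G C m).Reachable u v := by
    intro m i him u v hu hv
    have hsupp : ((C i).2.transfer (circuitsUpTo G C m) (hedsub m i him)).support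
        = (C i).2.support := SimpleGraph.Walk.support_transfer _ _
    have h1 : (circuitsUpTo G C m).Reachable (C i).1 u :=
      ⟨((C i).2.transfer (circuitsUpTo G C m) (hedsub m i him)).takeUntil u (hsupp ▸ hu)⟩
    have h2 : (circuitsUpTo G C m).Reachable (C i).1 v :=
      ⟨((C i).2.transfer (circuitsUpTo G C m) (hedsub m i him)).takeUntil v (hsupp ▸ hv)⟩
    exact h1.symm.trans h2
  -- a walk in T̄ within levels < m yields reachability in `circuitsUpTo m`
  have R : ∀ (m : ℕ) (a b : {l : Fin q // containsNewVertex G C l ∨ mergesComponents G C l})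
      (wk : T.Walk a b), (∀ w ∈ wk.support, (w.1 : ℕ) < m) → ∀ u u',
      u ∈ (C a.1).2.support → u' ∈ (C b.1).2.support →
      (circuitsUpTo G C m).Reachable u u' := by
    intro m a b wk
    induction wk with
    | nil =>
      intro hb u u' hu hu'
      exact reachInCircuit m _ (hb _ (SimpleGraph.Walk.start_mem_support _)) u u' hu hu'
    | @cons a a2 b h p ih =>
      intro hb u u' hu hu'
      have ha : (a.1 : ℕ) < m := hb a (SimpleGraph.Walk.start_mem_support _)
      have hrel := (by rw [hTdef, SimpleGraph.fromRel_adj] at h; exact h.2)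
      have hb' : ∀ w ∈ p.support, (w.1 : ℕ) < m := by
        intro w hw
        exact hb w (by rw [SimpleGraph.Walk.support_cons]; exact List.mem_cons_of_mem _ hw)
      obtain ⟨vv, hvvS, hvvpre⟩ | ⟨vv, hvvS, hvvpre⟩ := hrel
      · have h1 : vv ∈ (C a.1).2.support := (hS1 _ _ hvvS).1
        have h2 : vv ∈ (C a2.1).2.support := by
          rw [← hvvpre]; exact (hpre vv a.1 h1).2
        exact (reachInCircuit m a.1 ha u vv hu h1).trans
          (ih hb' vv u' h2 hu')
      · have h2 : vv ∈ (C a2.1).2.support := (hS1 _ _ hvvS).1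
        have h1 : vv ∈ (C a.1).2.support := by
          rw [← hvvpre]; exact (hpre vv a2.1 h2).2
        exact (reachInCircuit m a.1 ha u vv hu h1).trans
          (ih hb' vv u' h2 hu')
  -- main lemma: reachability in `circuitsUpTo m` gives reachability of `pre`s in T̄
  have L : ∀ m : ℕ, ∀ u v : V, (circuitsUpTo G C m).Reachable u v →
      ∀ (hu : containsNewVertex G C (pre u) ∨ mergesComponents G C (pre u))
        (hv : containsNewVertex G C (pre v) ∨ mergesComponents G C (pre v)),
      T.Reachable ⟨pre u, hu⟩ ⟨pre v, hv⟩ := by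
    intro m
    induction m using Nat.strong_induction_on with
    | _ m IH =>
    have P : ∀ (k : Fin q), (k : ℕ) < m → ∀ u v, u ∈ (C k).2.support → v ∈ (C k).2.support →
        ∀ hu hv, T.Reachable ⟨pre u, hu⟩ ⟨pre v, hv⟩ := by
      intro k hk u v hku hkv hu hv
      have Lk := IH (k : ℕ) hk
      by_cases hr : (circuitsUpTo G C (k : ℕ)).Reachable u v
      · exact Lk u v hr hu hv
      · have old : ∀ w, w ∈ (C k).2.support → pre w < k →
            ∃ s ∈ S k, (circuitsUpTo G C (k : ℕ)).Reachable w s :=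
          fun w hw hlt => hS2 k w hw ⟨pre w, hlt, (hpre w k hw).2⟩
        have hkW : containsNewVertex G C k ∨ mergesComponents G C k := by
          rcases lt_or_eq_of_le (hpre u k hku).1 with h1 | h1
          · rcases lt_or_eq_of_le (hpre v k hkv).1 with h2 | h2
            · obtain ⟨su, hsu, hru⟩ := old u hku h1
              obtain ⟨sv, hsv, hrv⟩ := old v hkv h2
              exact Or.inr ⟨su, sv, (hS1 k su hsu).1, (hS1 k sv hsv).1,
                (hS1 k su hsu).2, (hS1 k sv hsv).2,
                fun hss => hr (hru.trans (hss.trans hrv.symm))⟩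
            · exact Or.inl (newAt k v hkv h2)
          · exact Or.inl (newAt k u hku h1)
        have toK : ∀ w, w ∈ (C k).2.support → ∀ hw, T.Reachable ⟨pre w, hw⟩ ⟨k, hkW⟩ := by
          intro w hw hwW
          rcases lt_or_eq_of_le (hpre w k hw).1 with h1 | h1
          · obtain ⟨s, hs, hrs⟩ := old w hw h1
            have hsW : containsNewVertex G C (pre s) ∨ mergesComponents G C (pre s) :=
              Or.inl (preNew s k (hS1 k s hs).1)
            have hps : pre s < k := by
              obtain ⟨i, hik, hsi⟩ := (hS1 k s hs).2
              exact (hpre s i hsi).1.trans_lt hik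
            have hadj : T.Adj ⟨k, hkW⟩ ⟨pre s, hsW⟩ := by
              rw [hTdef, SimpleGraph.fromRel_adj]
              exact ⟨fun hE => hps.ne' (Subtype.ext_iff.mp hE), Or.inl ⟨s, hs, rfl⟩⟩
            exact (Lk w s hrs hwW hsW).trans hadj.reachable.symm
          · have : (⟨pre w, hwW⟩ :
                {l : Fin q // containsNewVertex G C l ∨ mergesComponents G C l})
                = ⟨k, hkW⟩ := Subtype.ext h1
            rw [this]
        exact (toK u hku hu).trans (toK v hkv hv).symm
    intro u v hr
    obtain ⟨wk⟩ := hr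
    induction wk with
    | nil => intro hu hv; exact SimpleGraph.Reachable.refl _
    | @cons u u2 v h p ih =>
      intro hu hv
      have h' : (∃ i : Fin q, (i : ℕ) < m ∧ s(u, u2) ∈ (C i).2.edges) ∧ u ≠ u2 := by
        have := h
        rw [circuitsUpTo, SimpleGraph.fromEdgeSet_adj] at this
        exact this
      obtain ⟨⟨i, him, he⟩, hne⟩ := h'
      have hu2s : u2 ∈ (C i).2.support := (C i).2.snd_mem_support_of_mem_edges he
      have hus : u ∈ (C i).2.support := (C i).2.fst_mem_support_of_mem_edges he
      have hu2 : containsNewVertex G C (pre u2) ∨ mergesComponents G C (pre u2) :=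
        Or.inl (preNew u2 i hu2s)
      exact (P i him u u2 hus hu2s hu hu2).trans (ih hu2 hv)
  -- every vertex of T̄ reaches a `pre` vertex of its own circuit
  have anchor : ∀ a : {l : Fin q // containsNewVertex G C l ∨ mergesComponents G C l},
      ∃ u, u ∈ (C a.1).2.support ∧ ∃ hu, T.Reachable a ⟨pre u, hu⟩ := by
    intro a
    rcases a.2 with h | h
    · obtain ⟨u, hus, hnew⟩ := h
      refine ⟨u, hus, Or.inl (preNew u a.1 hus), ?_⟩
      have hpeq : pre u = a.1 := le_antisymm (hpre u a.1 hus).1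
        (not_lt.mp fun hlt => hnew (pre u) hlt (hpre u a.1 hus).2)
      have hEq : (⟨pre u, Or.inl (preNew u a.1 hus)⟩ :
          {l : Fin q // containsNewVertex G C l ∨ mergesComponents G C l}) = a :=
        Subtype.ext hpeq
      rw [hEq]
    · obtain ⟨v0, w0, hv0, hw0, hv0old, hw0old, hnr⟩ := h
      obtain ⟨s, hsS, hrs⟩ := hS2 a.1 v0 hv0 hv0old
      refine ⟨s, (hS1 a.1 s hsS).1, Or.inl (preNew s a.1 (hS1 a.1 s hsS).1), ?_⟩
      have hps : pre s < a.1 := by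
        obtain ⟨i, hik, hsi⟩ := (hS1 a.1 s hsS).2
        exact (hpre s i hsi).1.trans_lt hik
      have hadj : T.Adj a ⟨pre s, Or.inl (preNew s a.1 (hS1 a.1 s hsS).1)⟩ := by
        rw [hTdef, SimpleGraph.fromRel_adj]
        exact ⟨fun hE => hps.ne' (Subtype.ext_iff.mp hE), Or.inl ⟨s, hsS, rfl⟩⟩
      exact hadj.reachable
  -- G is a subgraph of circuitsUpTo q
  have hGle : G ≤ circuitsUpTo G C q := by
    intro a b hab
    show (SimpleGraph.fromEdgeSet _).Adj a b
    rw [SimpleGraph.fromEdgeSet_adj]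
    obtain ⟨i, hi⟩ := (hcover s(a, b)).mp hab
    exact ⟨⟨i, i.2, hi⟩, hab.ne⟩
  -- direction lemma for edges of T̄
  have dirlem : ∀ a b, T.Adj a b → (b.1 : ℕ) < (a.1 : ℕ) → ∃ v ∈ S a.1, pre v = b.1 := by
    intro a b hab hba
    rw [hTdef, SimpleGraph.fromRel_adj] at hab
    obtain ⟨hne, h | h⟩ := hab
    · exact h
    · exfalso
      obtain ⟨v, hvS, hvp⟩ := h
      obtain ⟨i, hik, hvi⟩ := (hS1 b.1 v hvS).2
      have := Fin.lt_def.mp (hvp ▸ ((hpre v i hvi).1.trans_lt hik))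
      omega
  constructor
  · -- Connected
    have hWne : Nonempty {l : Fin q // containsNewVertex G C l ∨ mergesComponents G C l} :=
      ⟨⟨⟨0, hq⟩, Or.inl ⟨(C ⟨0, hq⟩).1, SimpleGraph.Walk.start_mem_support _,
        fun i hi => (Nat.not_lt_zero _ (Fin.lt_def.mp hi)).elim⟩⟩⟩
    refine SimpleGraph.Connected.mk ?_
    intro a b
    obtain ⟨u, hua, hu, hra⟩ := anchor a
    obtain ⟨u', hub, hu', hrb⟩ := anchor b
    have hgr : (circuitsUpTo G C q).Reachable u u' :=
      SimpleGraph.Reachable.mono hGle (hG.preconnected u u')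
    exact hra.trans ((L q u u' hgr hu hu').trans hrb.symm)
  · -- Acyclic
    intro x0 c hc
    have hxe : x0 ∈ c.support := SimpleGraph.Walk.start_mem_support c
    obtain ⟨x, hxmem, hmax⟩ := c.support.toFinset.exists_max_image
      (fun w => (w.1 : ℕ)) ⟨x0, List.mem_toFinset.mpr hxe⟩
    rw [List.mem_toFinset] at hxmem
    have hmax' : ∀ y ∈ c.support, (y.1 : ℕ) ≤ (x.1 : ℕ) :=
      fun y hy => hmax y (List.mem_toFinset.mpr hy)
    have hc' := hc.rotate hxmem
    set c' := c.rotate x hxmem with hc'def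
    have hbnd : ∀ y ∈ c'.support, (y.1 : ℕ) ≤ (x.1 : ℕ) := by
      intro y hy
      rw [SimpleGraph.Walk.support_eq_cons c'] at hy
      rcases List.mem_cons.mp hy with h | h
      · exact h ▸ le_rfl
      · exact hmax' y (List.mem_of_mem_tail
          (((c.support_rotate x hxmem).mem_iff).mp h))
    have hnn : ¬ c'.Nil := by
      intro hnil
      have h3 := hc'.three_le_length
      have h0 := SimpleGraph.Walk.nil_iff_length_eq.mp hnil
      omega
    have hadjxy : T.Adj x (c'.getVert 1) := c'.adj_snd hnn
    have hcons : SimpleGraph.Walk.cons hadjxy c'.tail = c' :=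
      SimpleGraph.Walk.cons_tail_eq c' hnn
    have hcyc2 : c'.tail.IsPath ∧ s(x, c'.getVert 1) ∉ c'.tail.edges := by
      rw [← hcons] at hc'
      exact (SimpleGraph.Walk.cons_isCycle_iff c'.tail hadjxy).mp hc'
    have hyx : c'.getVert 1 ≠ x := hadjxy.ne'
    have hnnp : ¬ c'.tail.Nil := SimpleGraph.Walk.not_nil_of_ne hyx
    have hnnpr : ¬ c'.tail.reverse.Nil := SimpleGraph.Walk.not_nil_of_ne (Ne.symm hyx)
    have hadjxz : T.Adj x (c'.tail.reverse.getVert 1) :=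
      c'.tail.reverse.adj_snd hnnpr
    have hcons2 : SimpleGraph.Walk.cons hadjxz c'.tail.reverse.tail = c'.tail.reverse :=
      SimpleGraph.Walk.cons_tail_eq c'.tail.reverse hnnpr
    have hprpath : c'.tail.reverse.IsPath := hcyc2.1.reverse
    have hxnot : x ∉ c'.tail.reverse.tail.support := by
      have hnd := hprpath.support_nodup
      rw [← hcons2, SimpleGraph.Walk.support_cons] at hnd
      exact (List.nodup_cons.mp hnd).1
    have hyz : c'.getVert 1 ≠ c'.tail.reverse.getVert 1 := by
      intro hEq
      apply hcyc2.2
      have hmem : s(x, c'.tail.reverse.getVert 1) ∈ c'.tail.reverse.edges := by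
        have : s(x, c'.tail.reverse.getVert 1)
            ∈ (SimpleGraph.Walk.cons hadjxz c'.tail.reverse.tail).edges := by
          rw [SimpleGraph.Walk.edges_cons]
          exact List.mem_cons_self
        rwa [hcons2] at this
      rw [SimpleGraph.Walk.edges_reverse, List.mem_reverse] at hmem
      rw [← hEq] at hmem
      exact hmem
    have hsubbnd : ∀ w ∈ c'.tail.reverse.tail.support, (w.1 : ℕ) < (x.1 : ℕ) := by
      intro w hw
      have hwx : w ≠ x := fun hE => hxnot (hE ▸ hw)
      have h1 : w ∈ c'.tail.reverse.support := by
        rw [← hcons2, SimpleGraph.Walk.support_cons]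
        exact List.mem_cons_of_mem _ hw
      rw [SimpleGraph.Walk.support_reverse, List.mem_reverse] at h1
      have h3 : w ∈ c'.support := by
        rw [SimpleGraph.Walk.support_tail_of_not_nil c' hnn] at h1
        exact List.mem_of_mem_tail h1
      exact lt_of_le_of_ne (hbnd w h3)
        (fun hE => hwx (Subtype.ext (Fin.val_injective hE)))
    have hylt : ((c'.getVert 1).1 : ℕ) < (x.1 : ℕ) :=
      hsubbnd _ (SimpleGraph.Walk.end_mem_support _)
    have hzlt : ((c'.tail.reverse.getVert 1).1 : ℕ) < (x.1 : ℕ) :=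
      hsubbnd _ (SimpleGraph.Walk.start_mem_support _)
    obtain ⟨v, hvS, hvp⟩ := dirlem x _ hadjxy hylt
    obtain ⟨v', hv'S, hv'p⟩ := dirlem x _ hadjxz hzlt
    have hvy : v ∈ (C (c'.getVert 1).1).2.support := by
      rw [← hvp]; exact (hpre v x.1 (hS1 x.1 v hvS).1).2
    have hv'z : v' ∈ (C (c'.tail.reverse.getVert 1).1).2.support := by
      rw [← hv'p]; exact (hpre v' x.1 (hS1 x.1 v' hv'S).1).2
    have hreach := R (x.1 : ℕ) _ _ c'.tail.reverse.tail hsubbnd v' v hv'z hvy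
    have hvv : v' = v := hS3 x.1 v' hv'S v hvS hreach
    apply hyz
    apply Subtype.ext
    rw [← hvp, ← hv'p, hvv]
end

section
/- With the construction of the previous setting, the number of vertices of T̄ is at most 2n, where n = |V|: at most n circuits can contain a previously-unseen vertex, and at most n - 1 circuits can merge two distinct connected components. -/
lemma circuitsUpTo_mono {V : Type*} (G : SimpleGraph V) {q : ℕ}
    (C : Fin q → Σ v : V, G.Walk v v) {a b : ℕ} (h : a ≤ b) :
    circuitsUpTo G C a ≤ circuitsUpTo G C b := by
  apply SimpleGraph.fromEdgeSet_mono
  rintro e ⟨i, hi, he⟩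
  exact ⟨i, lt_of_lt_of_le hi h, he⟩

lemma edges_mem_circuitsUpTo {V : Type*} (G : SimpleGraph V) {q : ℕ}
    (C : Fin q → Σ v : V, G.Walk v v) (l : Fin q) :
    ∀ e ∈ (C l).2.edges, e ∈ (circuitsUpTo G C ((l : ℕ) + 1)).edgeSet := by
  intro e he
  rw [circuitsUpTo, SimpleGraph.edgeSet_fromEdgeSet]
  refine ⟨⟨l, Nat.lt_succ_self _, he⟩, ?_⟩
  exact G.not_isDiag_of_mem_edgeSet ((C l).2.edges_subset_edgeSet he)

lemma reach_of_support {V : Type*} [DecidableEq V] (G : SimpleGraph V) {q : ℕ}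
    (C : Fin q → Σ v : V, G.Walk v v) (l : Fin q) {u : V}
    (hu : u ∈ (C l).2.support) :
    (circuitsUpTo G C ((l : ℕ) + 1)).Reachable (C l).1 u := by
  have h := edges_mem_circuitsUpTo G C l
  let p := (C l).2.transfer _ h
  have hu' : u ∈ p.support := by
    rwa [show p.support = (C l).2.support from SimpleGraph.Walk.support_transfer _ h]
  exact ⟨p.takeUntil u hu'⟩

lemma cc_surj {V : Type*} {H H' : SimpleGraph V} (h : H ≤ H') :
    Function.Surjective
      (SimpleGraph.ConnectedComponent.map (SimpleGraph.Hom.ofLE h)) := by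
  intro c
  induction c using SimpleGraph.ConnectedComponent.ind with
  | _ v => exact ⟨H.connectedComponentMk v, rfl⟩

lemma cc_card_le {V : Type*} [Fintype V] {H H' : SimpleGraph V} (h : H ≤ H') :
    Nat.card H'.ConnectedComponent ≤ Nat.card H.ConnectedComponent :=
  Nat.card_le_card_of_surjective _ (cc_surj h)

lemma cc_card_lt {V : Type*} [Fintype V] [DecidableEq V] (G : SimpleGraph V) {q : ℕ}
    (C : Fin q → Σ v : V, G.Walk v v) {l : Fin q} (hl : mergesComponents G C l) :
    Nat.card (circuitsUpTo G C ((l : ℕ) + 1)).ConnectedComponent <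
      Nat.card (circuitsUpTo G C (l : ℕ)).ConnectedComponent := by
  classical
  obtain ⟨v, w, hv, hw, -, -, hnr⟩ := hl
  have hle : circuitsUpTo G C (l : ℕ) ≤ circuitsUpTo G C ((l : ℕ) + 1) :=
    circuitsUpTo_mono G C (Nat.le_succ _)
  set φ := SimpleGraph.ConnectedComponent.map (SimpleGraph.Hom.ofLE hle) with hφ
  have hsurj := cc_surj hle
  have hreach : (circuitsUpTo G C ((l : ℕ) + 1)).Reachable v w :=
    (reach_of_support G C l hv).symm.trans (reach_of_support G C l hw)
  have hnotinj : ¬ Function.Injective φ := by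
    intro hinj
    apply hnr
    have h1 : φ ((circuitsUpTo G C (l : ℕ)).connectedComponentMk v)
        = φ ((circuitsUpTo G C (l : ℕ)).connectedComponentMk w) := by
      rw [hφ]
      simp only [SimpleGraph.ConnectedComponent.map_mk]
      exact SimpleGraph.ConnectedComponent.eq.mpr hreach
    exact SimpleGraph.ConnectedComponent.eq.mp (hinj h1)
  have : Fintype (circuitsUpTo G C (l : ℕ)).ConnectedComponent := Fintype.ofFinite _
  have : Fintype (circuitsUpTo G C ((l : ℕ) + 1)).ConnectedComponent := Fintype.ofFinite _
  rw [Nat.card_eq_fintype_card, Nat.card_eq_fintype_card]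
  exact Fintype.card_lt_of_surjective_not_injective φ hsurj hnotinj

/-- A vertex `w_l` is created in `T̄` iff `C l` contains a previously-unseen vertex or
merges two distinct components.  At most `n` circuits can contain a previously-unseen
vertex, at most `n - 1` circuits can merge two distinct components, so `T̄` has at most
`2 n` vertices, where `n = |V|`. -/
theorem tbar_card_le
    {V : Type*} [Fintype V] [DecidableEq V] (G : SimpleGraph V) (hG : G.Connected)
    (q : ℕ) (C : Fin q → Σ v : V, G.Walk v v)
    (hcirc : ∀ i, (C i).2.IsCircuit)
    (hdisj : ∀ i j, i ≠ j → ∀ e : Sym2 V, e ∈ (C i).2.edges → e ∉ (C j).2.edges)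
    (hcover : ∀ e : Sym2 V, e ∈ G.edgeSet ↔ ∃ i, e ∈ (C i).2.edges) :
    {l : Fin q | containsNewVertex G C l}.ncard ≤ Fintype.card V ∧
    {l : Fin q | mergesComponents G C l}.ncard ≤ Fintype.card V - 1 ∧
    {l : Fin q | containsNewVertex G C l ∨ mergesComponents G C l}.ncard ≤
      2 * Fintype.card V := by
  classical
  set n := Fintype.card V with hn
  -- Part 1
  have h1 : {l : Fin q | containsNewVertex G C l}.ncard ≤ n := by
    set g : Fin q → V := fun l =>
      if h : containsNewVertex G C l then h.choose else (C l).1 with hg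
    have key : ∀ l ∈ {l : Fin q | containsNewVertex G C l}, ∀ l' ∈ {l : Fin q | containsNewVertex G C l},
        l < l' → g l ≠ g l' := by
      intro l hl l' hl' hlt heq
      simp only [Set.mem_setOf_eq] at hl hl'
      rw [hg] at heq
      simp only [dif_pos hl, dif_pos hl'] at heq
      have h1 := hl.choose_spec.1
      have h2 := hl'.choose_spec.2 l hlt
      rw [heq] at h1
      exact h2 h1
    have hinj : Set.InjOn g {l : Fin q | containsNewVertex G C l} := by
      intro l hl l' hl' heq
      by_contra hne
      rcases lt_or_gt_of_ne hne with h | h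
      · exact key l hl l' hl' h heq
      · exact key l' hl' l hl h heq.symm
    calc {l : Fin q | containsNewVertex G C l}.ncard
        ≤ (Set.univ : Set V).ncard :=
          Set.ncard_le_ncard_of_injOn g (fun _ _ => Set.mem_univ _) hinj Set.finite_univ
      _ = n := by rw [Set.ncard_univ, Nat.card_eq_fintype_card]
  -- Part 2
  have h2 : {l : Fin q | mergesComponents G C l}.ncard ≤ n - 1 := by
    set f : ℕ → ℕ := fun m => Nat.card (circuitsUpTo G C m).ConnectedComponent with hf
    have fanti : ∀ a b : ℕ, a ≤ b → f b ≤ f a := fun a b h =>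
      cc_card_le (circuitsUpTo_mono G C h)
    set F : Fin q → ℕ := fun l => f ((l : ℕ) + 1) with hF
    have key : ∀ l ∈ {l : Fin q | mergesComponents G C l},
        ∀ l' ∈ {l : Fin q | mergesComponents G C l}, l < l' → F l' < F l := by
      intro l hl l' hl' hlt
      calc F l' < f (l' : ℕ) := cc_card_lt G C hl'
        _ ≤ f ((l : ℕ) + 1) := fanti _ _ hlt
    have hinj : Set.InjOn F {l : Fin q | mergesComponents G C l} := by
      intro l hl l' hl' heq
      by_contra hne
      rcases lt_or_gt_of_ne hne with h | h
      · exact absurd heq (key l hl l' hl' h).ne'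
      · exact absurd heq (key l' hl' l hl h).ne
    have hmem : ∀ l ∈ {l : Fin q | mergesComponents G C l}, F l ∈ Set.Icc 1 (n - 1) := by
      intro l hl
      obtain ⟨v, -, -, -, -, -, -⟩ := id hl
      have hne : Nonempty V := ⟨v⟩
      have hpos : 1 ≤ F l := Nat.one_le_iff_ne_zero.mpr <| by
        have : Nonempty (circuitsUpTo G C ((l : ℕ) + 1)).ConnectedComponent :=
          ⟨(circuitsUpTo G C ((l : ℕ) + 1)).connectedComponentMk v⟩
        exact Nat.card_ne_zero.mpr ⟨this, inferInstance⟩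
      have hlt : F l < f (l : ℕ) := cc_card_lt G C hl
      have hfn : f (l : ℕ) ≤ n := by
        have : Function.Surjective
            ((circuitsUpTo G C (l : ℕ)).connectedComponentMk) :=
          SimpleGraph.ConnectedComponent.ind fun v => ⟨v, rfl⟩
        calc f (l : ℕ) ≤ Nat.card V := Nat.card_le_card_of_surjective _ this
          _ = n := Nat.card_eq_fintype_card
      exact ⟨hpos, by omega⟩
    calc {l : Fin q | mergesComponents G C l}.ncard
        ≤ (Set.Icc 1 (n - 1)).ncard :=
          Set.ncard_le_ncard_of_injOn F hmem hinj (Set.finite_Icc _ _)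
      _ = n - 1 := by
          rw [show (Set.Icc 1 (n - 1) : Set ℕ) = ↑(Finset.Icc 1 (n - 1)) by simp,
            Set.ncard_coe_finset, Nat.card_Icc]
          omega
  refine ⟨h1, h2, ?_⟩
  have : {l : Fin q | containsNewVertex G C l ∨ mergesComponents G C l} =
      {l : Fin q | containsNewVertex G C l} ∪ {l : Fin q | mergesComponents G C l} := rfl
  rw [this]
  calc ({l : Fin q | containsNewVertex G C l} ∪ {l : Fin q | mergesComponents G C l}).ncard
      ≤ {l : Fin q | containsNewVertex G C l}.ncard
        + {l : Fin q | mergesComponents G C l}.ncard := Set.ncard_union_le _ _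
    _ ≤ n + (n - 1) := Nat.add_le_add h1 h2
    _ ≤ 2 * n := by omega
end

section
/- Let T be a rooted tree on circuits C_1, ..., C_q as in the circuit-merging setting, and define one round of merging: every circuit whose tree vertex has odd depth is spliced into its parent circuit at a shared vertex. After one round, the resulting collection of merged circuits is again a partition of E into edge-disjoint circuits, and the induced tree (obtained by contracting odd-depth vertices into their parents) again satisfies that adjacent circuits share a vertex. -/
open SimpleGraph List

section Aux
variable {V : Type*} [DecidableEq V] {G : SimpleGraph V}

lemma splice_exists {u : V} (p : G.Walk u u) {w : V} (x : G.Walk w w)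
    {v : V} (hp : v ∈ p.support) (hx : v ∈ x.support) :
    ∃ p' : G.Walk u u, p'.edges.Perm (x.edges ++ p.edges) ∧
      (∀ y, y ∈ p'.support ↔ y ∈ p.support ∨ y ∈ x.support) := by
  refine ⟨(p.takeUntil v hp).append ((x.rotate v hx).append (p.dropUntil v hp)), ?_, ?_⟩
  · rw [Walk.edges_append, Walk.edges_append]
    have h1 : (x.rotate v hx).edges ~ x.edges := (x.rotate_edges v hx).perm
    have h2 : (p.takeUntil v hp).edges ++ (p.dropUntil v hp).edges = p.edges := by
      rw [← Walk.edges_append, Walk.take_spec]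
    have key : (p.takeUntil v hp).edges ++ ((x.rotate v hx).edges ++ (p.dropUntil v hp).edges)
        ~ (x.rotate v hx).edges ++ ((p.takeUntil v hp).edges ++ (p.dropUntil v hp).edges) :=
      List.perm_append_comm_assoc _ _ _
    rw [h2] at key
    exact key.trans (h1.append_right _)
  · intro y
    have hxr : y ∈ (x.rotate v hx).support ↔ y ∈ x.support := by
      constructor
      · intro h; rw [Walk.rotate, Walk.mem_support_append_iff] at h
        rcases h with h | h
        · exact Walk.support_dropUntil_subset _ _ h
        · exact Walk.support_takeUntil_subset _ _ h
      · intro h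
        rw [← Walk.take_spec x hx, Walk.mem_support_append_iff] at h
        rw [Walk.rotate, Walk.mem_support_append_iff]
        tauto
    have hpd : y ∈ p.support ↔
        y ∈ (p.takeUntil v hp).support ∨ y ∈ (p.dropUntil v hp).support := by
      conv_lhs => rw [← Walk.take_spec p hp]
      exact Walk.mem_support_append_iff _ _
    rw [Walk.mem_support_append_iff, Walk.mem_support_append_iff, hxr, hpd]
    tauto

lemma splice_list {u : V} (L : List (Σ w : V, G.Walk w w)) (p : G.Walk u u)
    (hsh : ∀ x ∈ L, ∃ v, v ∈ p.support ∧ v ∈ x.2.support) :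
    ∃ p' : G.Walk u u,
      p'.edges.Perm (p.edges ++ (L.map (fun x => x.2.edges)).flatten) ∧
      (∀ y, y ∈ p'.support ↔ y ∈ p.support ∨ ∃ x ∈ L, y ∈ x.2.support) := by
  induction L generalizing p with
  | nil => exact ⟨p, by simp, by simp⟩
  | cons x L ih =>
    obtain ⟨v, hvp, hvx⟩ := hsh x (List.mem_cons_self)
    obtain ⟨p1, hperm1, hsupp1⟩ := splice_exists p x.2 hvp hvx
    obtain ⟨p', hperm, hsupp⟩ := ih p1 (fun y hy => by
      obtain ⟨v', h1, h2⟩ := hsh y (List.mem_cons_of_mem _ hy)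
      exact ⟨v', (hsupp1 v').2 (Or.inl h1), h2⟩)
    refine ⟨p', ?_, ?_⟩
    · have hfl : ((x :: L).map (fun x => x.2.edges)).flatten
          = x.2.edges ++ (L.map (fun x => x.2.edges)).flatten := by simp
      rw [hfl]
      have h3 : (x.2.edges ++ p.edges) ++ (L.map (fun x => x.2.edges)).flatten
          ~ p.edges ++ (x.2.edges ++ (L.map (fun x => x.2.edges)).flatten) := by
        rw [List.append_assoc]
        exact List.perm_append_comm_assoc _ _ _
      exact (hperm.trans (hperm1.append_right _)).trans h3
    · intro y
      rw [hsupp y, hsupp1 y]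
      simp only [List.mem_cons]
      constructor
      · rintro (⟨h | h⟩ | ⟨z, hz, hzz⟩)
        · exact Or.inl h
        · exact Or.inr ⟨x, Or.inl rfl, h⟩
        · exact Or.inr ⟨z, Or.inr hz, hzz⟩
      · rintro (h | ⟨z, (rfl | hz), hzz⟩)
        · exact Or.inl (Or.inl h)
        · exact Or.inl (Or.inr hzz)
        · exact Or.inr ⟨z, hz, hzz⟩

end Aux


/-- One round of merging in the circuit-merging setting: the edge set of an Eulerian
graph `G` is partitioned into circuits `C 0, ..., C (q-1)`, organized in a rooted tree
(given by a parent function and depths on `Fin q`) in which adjacent circuits share a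
vertex.  Splicing every circuit of odd tree depth into its parent circuit at a shared
vertex yields a collection of circuits, indexed by the even-depth tree vertices, that is
again an edge-disjoint partition of `E`; each even-depth circuit is contained in its
merged circuit, each odd-depth circuit is absorbed into the merged circuit of its parent,
and in the contracted tree (whose parent function is `parent ∘ parent`) adjacent merged
circuits again share a vertex. -/
theorem merge_round_circuits
    {V : Type*} [Fintype V] [DecidableEq V] (G : SimpleGraph V)
    (hG : ∃ (v : V) (p : G.Walk v v), p.IsEulerian)
    (q : ℕ) (hq : 0 < q) (C : Fin q → Σ v : V, G.Walk v v)
    (hcirc : ∀ i, (C i).2.IsCircuit)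
    (hdisj : ∀ i j, i ≠ j → ∀ e : Sym2 V, e ∈ (C i).2.edges → e ∉ (C j).2.edges)
    (hcover : ∀ e : Sym2 V, e ∈ G.edgeSet ↔ ∃ i, e ∈ (C i).2.edges)
    (parent : Fin q → Fin q) (depth : Fin q → ℕ)
    (hd0 : ∀ i, depth i = 0 → parent i = i)
    (hstep : ∀ i, depth i ≠ 0 → depth (parent i) + 1 = depth i)
    (hreach : ∀ i, ∃ k : ℕ, depth (parent^[k] i) = 0)
    (hshare : ∀ i, depth i ≠ 0 →
      ∃ v : V, v ∈ (C (parent i)).2.support ∧ v ∈ (C i).2.support) :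
    ∃ C' : {i : Fin q // Even (depth i)} → Σ v : V, G.Walk v v,
      -- the merged walks are again circuits,
      (∀ i, (C' i).2.IsCircuit) ∧
      -- pairwise edge-disjoint,
      (∀ i j, i ≠ j → ∀ e : Sym2 V, e ∈ (C' i).2.edges → e ∉ (C' j).2.edges) ∧
      -- and they partition the edge set of `G`;
      (∀ e : Sym2 V, e ∈ G.edgeSet ↔ ∃ i, e ∈ (C' i).2.edges) ∧
      -- each even-depth circuit is spliced (with its odd-depth children) into `C' i`,
      (∀ i, ∀ e ∈ (C i.1).2.edges, e ∈ (C' i).2.edges) ∧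
      -- each odd-depth circuit is spliced into the merged circuit of its parent,
      (∀ j, Odd (depth j) → ∀ hp : Even (depth (parent j)),
        ∀ e ∈ (C j).2.edges, e ∈ (C' ⟨parent j, hp⟩).2.edges) ∧
      -- and in the contracted tree adjacent merged circuits share a vertex:
      (∀ i : {i : Fin q // Even (depth i)}, depth i.1 ≠ 0 →
        ∀ hp : Even (depth (parent (parent i.1))),
          ∃ v : V, v ∈ (C' ⟨parent (parent i.1), hp⟩).2.support ∧
            v ∈ (C' i).2.support) := by
  classical
  -- per even-depth vertex, construct the merged circuit
  have key : ∀ i : Fin q, Even (depth i) →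
      ∃ p' : G.Walk (C i).1 (C i).1,
        p'.IsCircuit ∧
        (∀ e, e ∈ p'.edges ↔ e ∈ (C i).2.edges ∨
          ∃ j, Odd (depth j) ∧ parent j = i ∧ e ∈ (C j).2.edges) ∧
        (∀ y, y ∈ p'.support ↔ y ∈ (C i).2.support ∨
          ∃ j, Odd (depth j) ∧ parent j = i ∧ y ∈ (C j).2.support) := by
    intro i hi
    set Lidx : List (Fin q) :=
      (Finset.univ.filter (fun j => Odd (depth j) ∧ parent j = i)).toList with hL
    have hmem : ∀ j, j ∈ Lidx ↔ Odd (depth j) ∧ parent j = i := by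
      intro j; simp [hL]
    have hnodupL : Lidx.Nodup := Finset.nodup_toList _
    have hsh : ∀ x ∈ Lidx.map C, ∃ v, v ∈ (C i).2.support ∧ v ∈ x.2.support := by
      intro x hx
      obtain ⟨j, hj, rfl⟩ := List.mem_map.1 hx
      obtain ⟨hodd, hpar⟩ := (hmem j).1 hj
      have hne : depth j ≠ 0 := by
        intro h; rw [h] at hodd; simp at hodd
      obtain ⟨v, hv1, hv2⟩ := hshare j hne
      rw [hpar] at hv1
      exact ⟨v, hv1, hv2⟩
    obtain ⟨p', hperm, hsupp⟩ := splice_list (Lidx.map C) (C i).2 hsh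
    · have hedge : ∀ e, e ∈ p'.edges ↔ e ∈ (C i).2.edges ∨
          ∃ j, Odd (depth j) ∧ parent j = i ∧ e ∈ (C j).2.edges := by
        intro e
        rw [hperm.mem_iff, List.mem_append, List.mem_flatten]
        constructor
        · rintro (h | ⟨l, hl, he⟩)
          · exact Or.inl h
          · simp only [List.mem_map] at hl
            obtain ⟨x, hx, rfl⟩ := hl
            obtain ⟨j, hj, rfl⟩ := hx
            exact Or.inr ⟨j, ((hmem j).1 hj).1, ((hmem j).1 hj).2, he⟩
        · rintro (h | ⟨j, h1, h2, he⟩)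
          · exact Or.inl h
          · refine Or.inr ⟨(C j).2.edges, ?_, he⟩
            exact List.mem_map.2 ⟨C j, List.mem_map.2 ⟨j, (hmem j).2 ⟨h1, h2⟩, rfl⟩, rfl⟩
      refine ⟨p', ⟨⟨?_⟩, ?_⟩, hedge, ?_⟩
      · -- edges nodup
        rw [hperm.nodup_iff]
        rw [List.nodup_append]
        refine ⟨(hcirc i).edges_nodup, ?_, ?_⟩
        · rw [List.map_map, List.nodup_flatten]
          constructor
          · intro l hl
            obtain ⟨j, _, rfl⟩ := List.mem_map.1 hl
            exact (hcirc j).edges_nodup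
          · refine List.Pairwise.map _ ?_ hnodupL
            · intro a b hab e hea heb
              exact hdisj a b hab e hea heb
        · intro e he e' he' hee; subst hee
          rw [List.map_map, List.mem_flatten] at he'
          obtain ⟨l, hl, hel⟩ := he'
          obtain ⟨j, hj, rfl⟩ := List.mem_map.1 hl
          have hji : j ≠ i := by
            intro h; subst h
            exact Nat.not_even_iff_odd.2 ((hmem j).1 hj).1 hi
          exact hdisj i j (Ne.symm hji) e he hel
      · -- not nil
        intro hnil
        have h1 : p'.edges = [] := by rw [hnil]; rfl
        have h2 := hperm.length_eq
        rw [h1] at h2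
        simp only [List.length_nil, List.length_append] at h2
        have h3 : (C i).2.edges.length ≠ 0 := by
          rw [Walk.length_edges]
          intro h
          exact (hcirc i).not_nil (Walk.nil_iff_length_eq.2 h)
        omega
      · -- support
        intro y
        rw [hsupp y]
        constructor
        · rintro (h | ⟨x, hx, hy⟩)
          · exact Or.inl h
          · obtain ⟨j, hj, rfl⟩ := List.mem_map.1 hx
            exact Or.inr ⟨j, ((hmem j).1 hj).1, ((hmem j).1 hj).2, hy⟩
        · rintro (h | ⟨j, h1, h2, hy⟩)
          · exact Or.inl h
          · exact Or.inr ⟨C j, List.mem_map.2 ⟨j, (hmem j).2 ⟨h1, h2⟩, rfl⟩, hy⟩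
  choose w hw1 hw2 hw3 using fun i : {i : Fin q // Even (depth i)} => key i.1 i.2
  refine ⟨fun i => ⟨(C i.1).1, w i⟩, fun i => hw1 i, ?_, ?_, ?_, ?_, ?_⟩
  · -- disjoint
    intro i j hij e hei hej
    have hij' : i.1 ≠ j.1 := fun h => hij (Subtype.ext h)
    rcases (hw2 i e).1 hei with h1 | ⟨k, hk1, hk2, hk3⟩ <;>
      rcases (hw2 j e).1 hej with h2 | ⟨k', hk1', hk2', hk3'⟩
    · exact hdisj i.1 j.1 hij' e h1 h2
    · have : k' ≠ i.1 := by
        intro h; rw [h] at hk1'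
        exact Nat.not_even_iff_odd.2 hk1' i.2
      exact hdisj i.1 k' (Ne.symm this) e h1 hk3'
    · have : k ≠ j.1 := by
        intro h; rw [h] at hk1
        exact Nat.not_even_iff_odd.2 hk1 j.2
      exact hdisj k j.1 this e hk3 h2
    · have : k ≠ k' := by
        intro h; subst h; rw [hk2] at hk2'; exact hij' hk2'
      exact hdisj k k' this e hk3 hk3'
  · -- cover
    intro e
    rw [hcover e]
    constructor
    · rintro ⟨k, hk⟩
      by_cases h : Even (depth k)
      · exact ⟨⟨k, h⟩, (hw2 ⟨k, h⟩ e).2 (Or.inl hk)⟩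
      · have hodd : Odd (depth k) := Nat.not_even_iff_odd.1 h
        have hne : depth k ≠ 0 := by
          intro h0; rw [h0] at hodd; simp at hodd
        have hp := hstep k hne
        have hpe : Even (depth (parent k)) := by
          rcases hodd with ⟨m, hm⟩
          exact ⟨m, by omega⟩
        exact ⟨⟨parent k, hpe⟩, (hw2 ⟨parent k, hpe⟩ e).2 (Or.inr ⟨k, hodd, rfl, hk⟩)⟩
    · rintro ⟨i, hi⟩
      rcases (hw2 i e).1 hi with h | ⟨k, _, _, hk⟩
      · exact ⟨i.1, h⟩
      · exact ⟨k, hk⟩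
  · -- even circuits included
    intro i e he
    exact (hw2 i e).2 (Or.inl he)
  · -- odd circuits absorbed
    intro j hodd hp e he
    exact (hw2 ⟨parent j, hp⟩ e).2 (Or.inr ⟨j, hodd, rfl, he⟩)
  · -- contracted tree shares vertices
    intro i hne hp
    obtain ⟨v, hv1, hv2⟩ := hshare i.1 hne
    have hstepi := hstep i.1 hne
    have hoddp : Odd (depth (parent i.1)) := by
      rcases i.2 with ⟨m, hm⟩
      refine Nat.not_even_iff_odd.1 ?_
      rintro ⟨n, hn⟩
      omega
    refine ⟨v, ?_, ?_⟩
    · exact (hw3 ⟨parent (parent i.1), hp⟩ v).2 (Or.inr ⟨parent i.1, hoddp, rfl, hv1⟩)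
    · exact (hw3 i v).2 (Or.inl hv2)
end
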